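/- (Hadamard–Fischer-type inequality for PSD matrices under subset union) Let L be an n×n symmetric positive semidefinite matrix and let A, B ⊆ Fin n. Then det(L_{A∪B}) · det(L_{A∩B}) ≤ det(L_A) · det(L_B). -/

import Mathlib

/-!
For positive definite `L` the Schur complement `K` of `L_S` satisfies
`det L_{S ∪ T} = det L_S · det K_T` for `T` disjoint from `S`. Hence the local inequality
`det L_{S+i+j} · det L_S ≤ det L_{S+i} · det L_{S+j}` is `K_ii K_jj - K_ij² ≤ K_ii K_jj`.
Local submodularity of `S ↦ log det L_S` propagates to submodularity by induction, and the
positive semidefinite case follows by letting `ε → 0⁺` in `L + ε • 1`.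
-/

/-- Principal minor of `L` indexed by `C`, with value `1` when `C = ∅`. -/
def pminor {n : ℕ} (L : Matrix (Fin n) (Fin n) ℝ) (C : Finset (Fin n)) : ℝ :=
  (L.submatrix (fun i : C => (i : Fin n)) (fun j : C => (j : Fin n))).det

open Finset Matrix Filter Topology

theorem add_le_add_of_add_le_add_of_add_le_add {β : Type*} [AddCommMonoid β] [PartialOrder β]
    [IsOrderedCancelAddMonoid β] {a b c d e g : β} (h₁ : a + b ≤ c + d)
    (h₂ : c + e ≤ g + b) : a + e ≤ g + d :=
  le_of_add_le_add_right (a := c + b) <|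
    calc a + e + (c + b) = (a + b) + (c + e) := by abel
      _ ≤ (c + d) + (g + b) := add_le_add h₁ h₂
      _ = g + d + (c + b) := by abel

theorem Real.log_add_log_le_log_add_log_iff {a b c d : ℝ} (ha : 0 < a) (hb : 0 < b)
    (hc : 0 < c) (hd : 0 < d) : log a + log b ≤ log c + log d ↔ a * b ≤ c * d := by
  rw [← log_mul ha.ne' hb.ne', ← log_mul hc.ne' hd.ne',
    log_le_log_iff (mul_pos ha hb) (mul_pos hc hd)]

section Submodular

variable {α β : Type*} [DecidableEq α] [AddCommMonoid β] [PartialOrder β]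
  [IsOrderedCancelAddMonoid β] {f : Finset α → β}
  (hf : ∀ S i j, i ∉ S → j ∉ S → i ≠ j →
    f (insert i (insert j S)) + f S ≤ f (insert i S) + f (insert j S))
include hf

theorem insert_add_le_insert_add_of_subset {S T : Finset α} {i : α} (hST : S ⊆ T)
    (hi : i ∉ T) : f (insert i T) + f S ≤ f (insert i S) + f T := by
  obtain ⟨U, rfl⟩ : ∃ U, T = S ∪ U := ⟨T, (union_eq_right.2 hST).symm⟩
  induction U using Finset.induction_on with
  | empty => simp
  | insert j U _ ih =>
    rw [union_insert] at hi ⊢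
    have hiU : i ∉ S ∪ U := fun h => hi (mem_insert_of_mem h)
    by_cases hj : j ∈ S ∪ U
    · rw [insert_eq_of_mem hj]
      exact ih subset_union_left hiU
    · exact add_le_add_of_add_le_add_of_add_le_add
        (hf _ i j hiU hj fun h => hi (by simp [h])) (ih subset_union_left hiU)

theorem union_add_le_union_add_of_subset {S T U : Finset α} (hST : S ⊆ T) (hUT : Disjoint U T) :
    f (T ∪ U) + f S ≤ f (S ∪ U) + f T := by
  induction U using Finset.induction_on with
  | empty => simp [add_comm]
  | insert i U hiU ih =>
    rw [disjoint_insert_left] at hUT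
    have hstep := insert_add_le_insert_add_of_subset hf (union_subset_union_left hST (t := U))
      (i := i) (by simp [hUT.1, hiU])
    rw [union_insert, union_insert, add_comm _ (f T)]
    rw [add_comm (f (insert i (S ∪ U)))] at hstep
    exact add_le_add_of_add_le_add_of_add_le_add hstep (by rw [add_comm (f T)]; exact ih hUT.2)

theorem union_add_inter_le_add (A B : Finset α) : f (A ∪ B) + f (A ∩ B) ≤ f A + f B := by
  have h := union_add_le_union_add_of_subset hf (inter_subset_right (s₁ := A) (s₂ := B))
    (sdiff_disjoint (s := B) (t := A))
  rwa [union_sdiff_self_eq_union, union_comm,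
    show A ∩ B ∪ A \ B = A from sup_inf_sdiff A B] at h

end Submodular

section SchurComplement

variable {ι R : Type*} [DecidableEq ι] [CommRing R]

/-- The Schur complement of `L_S` in `L`, kept as an `ι × ι` matrix (its rows and columns in `S`
vanish) so that its principal minors on sets disjoint from `S` are again `pminor`s. -/
noncomputable def schurCompl (L : Matrix ι ι R) (S : Finset ι) : Matrix ι ι R :=
  let v : S → ι := Subtype.val
  L - L.submatrix id v * (L.submatrix v v)⁻¹ * L.submatrix v id

theorem isSymm_schurCompl {L : Matrix ι ι R} (hL : L.IsSymm) (S : Finset ι) :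
    (schurCompl L S).IsSymm := by
  simp only [Matrix.IsSymm, schurCompl, transpose_sub, transpose_mul, transpose_submatrix,
    transpose_nonsing_inv, hL.eq, Matrix.mul_assoc]

end SchurComplement

section PrincipalMinors

variable {n : ℕ}

theorem pminor_union_of_disjoint (L : Matrix (Fin n) (Fin n) ℝ) {S T : Finset (Fin n)}
    (hST : Disjoint S T) (hS : pminor L S ≠ 0) :
    pminor L (S ∪ T) = pminor L S * pminor (schurCompl L S) T := by
  have : Invertible (L.submatrix (Subtype.val : S → Fin n) Subtype.val) :=
    ((isUnit_iff_isUnit_det _).2 hS.isUnit).invertible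
  let e := Equiv.Finset.union S T hST
  have hblocks : (L.submatrix (Subtype.val : ↥(S ∪ T) → Fin n) Subtype.val).submatrix e e =
      fromBlocks (L.submatrix Subtype.val Subtype.val) (L.submatrix Subtype.val Subtype.val)
        (L.submatrix Subtype.val Subtype.val) (L.submatrix Subtype.val Subtype.val) := by
    ext (a | a) (b | b) <;> rfl
  rw [pminor, ← det_submatrix_equiv_self e, hblocks, det_fromBlocks₁₁, invOf_eq_nonsing_inv]
  rfl

theorem pminor_singleton (M : Matrix (Fin n) (Fin n) ℝ) (i : Fin n) : pminor M {i} = M i i :=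
  det_unique _

theorem pminor_pair (M : Matrix (Fin n) (Fin n) ℝ) {i j : Fin n} (hij : i ≠ j) :
    pminor M {i, j} = M i i * M j j - M i j * M j i := by
  let e : Fin 2 ≃ ({i, j} : Finset (Fin n)) := Equiv.ofBijective
    (fun k => ⟨![i, j] k, by fin_cases k <;> simp⟩)
    ⟨by intro a b hab; fin_cases a <;> fin_cases b <;> simp_all [Subtype.ext_iff, hij.symm],
     by rintro ⟨x, hx⟩; rcases mem_insert.1 hx with rfl | hx
        · exact ⟨0, rfl⟩
        · exact ⟨1, by simp [mem_singleton.1 hx]⟩⟩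
  rw [pminor, ← det_submatrix_equiv_self e, det_fin_two]
  rfl

theorem continuous_pminor (C : Finset (Fin n)) :
    Continuous fun L : Matrix (Fin n) (Fin n) ℝ => pminor L C :=
  (continuous_id.matrix_submatrix _ _).matrix_det

namespace Matrix.PosDef

variable {L : Matrix (Fin n) (Fin n) ℝ}

theorem pminor_pos (hL : L.PosDef) (C : Finset (Fin n)) : 0 < pminor L C :=
  (hL.submatrix Subtype.val_injective).det_pos

theorem pminor_insert_insert_mul_le (hL : L.PosDef) {S : Finset (Fin n)} {i j : Fin n}
    (hi : i ∉ S) (hj : j ∉ S) (hij : i ≠ j) :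
    pminor L (insert i (insert j S)) * pminor L S ≤
      pminor L (insert i S) * pminor L (insert j S) := by
  set K := schurCompl L S
  have hS := hL.pminor_pos S
  have hschur : ∀ T, Disjoint S T → pminor L (T ∪ S) = pminor L S * pminor K T :=
    fun T hT => by rw [union_comm, pminor_union_of_disjoint L hT hS.ne']
  have hKji : K j i = K i j :=
    (isSymm_schurCompl (isHermitian_iff_isSymm.1 hL.isHermitian) S).apply i j
  have hLi : pminor L (insert i S) = pminor L S * K i i := by
    rw [insert_eq, hschur _ (by simpa), pminor_singleton]
  have hLj : pminor L (insert j S) = pminor L S * K j j := by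
    rw [insert_eq, hschur _ (by simpa), pminor_singleton]
  have hLij : pminor L (insert i (insert j S)) = pminor L S * (K i i * K j j - K i j * K i j) := by
    rw [insert_eq j, ← insert_union, hschur _ (by simp [hi, hj]), pminor_pair K hij, hKji]
  rw [hLij, hLi, hLj]
  nlinarith [mul_self_nonneg (pminor L S * K i j)]

theorem pminor_union_inter_le (hL : L.PosDef) (A B : Finset (Fin n)) :
    pminor L (A ∪ B) * pminor L (A ∩ B) ≤ pminor L A * pminor L B := by
  have hpos := hL.pminor_pos
  rw [← Real.log_add_log_le_log_add_log_iff (hpos _) (hpos _) (hpos _) (hpos _)]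
  refine union_add_inter_le_add (f := fun C => Real.log (pminor L C))
    (fun S i j hi hj hij => ?_) A B
  rw [Real.log_add_log_le_log_add_log_iff (hpos _) (hpos _) (hpos _) (hpos _)]
  exact hL.pminor_insert_insert_mul_le hi hj hij

end Matrix.PosDef

end PrincipalMinors

/-- Multiplicative submodularity of principal minors of a symmetric PSD matrix
(Hadamard–Fischer-type inequality). -/
theorem pminor_union_inter_le {n : ℕ} (L : Matrix (Fin n) (Fin n) ℝ)
    (hL : L.PosSemidef) (A B : Finset (Fin n)) :
    pminor L (A ∪ B) * pminor L (A ∩ B) ≤ pminor L A * pminor L B := by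
  have hlim (C : Finset (Fin n)) :
      Tendsto (fun ε : ℝ => pminor (L + ε • 1) C) (𝓝[>] 0) (𝓝 (pminor L C)) := by
    have h := ((continuous_pminor C).comp
      (f := fun ε : ℝ => L + ε • (1 : Matrix (Fin n) (Fin n) ℝ)) (by fun_prop)).tendsto 0
    simpa [Function.comp_def] using h.mono_left nhdsWithin_le_nhds
  refine le_of_tendsto_of_tendsto ((hlim _).mul (hlim _)) ((hlim _).mul (hlim _))
    (eventually_nhdsWithin_of_forall fun ε hε => ?_)
  exact (PosDef.posSemidef_add hL (PosDef.one.smul hε)).pminor_union_inter_le A B
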